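/- In the even-case algebra of integrals with generators H (Casimir), F_1,...,F_{m-1}, G_1,...,G_{m-1} and brackets {F_i,G_j} = −F_iG_j (κ<0), −F_{m-j}G_{m-i} (κ≥0), the functions J_k = F_{m−1−l}G_{1+k} − F_{m−1−k}G_{1+l} satisfy {F_i, J_k} = 0 for all i with m−1−l ≤ i ≤ m−1 and all k with l+1 ≤ k ≤ m−2. -/

import Mathlib

noncomputable def pd {n : ℕ} (i : Fin n) (f : (Fin n → ℝ) → ℝ) (x : Fin n → ℝ) : ℝ :=
  fderiv ℝ f x (Pi.single i 1)

noncomputable def pb {n : ℕ} (P : Fin n → Fin n → (Fin n → ℝ) → ℝ)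
    (f g : (Fin n → ℝ) → ℝ) (x : Fin n → ℝ) : ℝ :=
  ∑ i : Fin n, ∑ j : Fin n, P i j x * pd i f x * pd j g x

def get {n : ℕ} (x : Fin n → ℝ) (i : ℕ) : ℝ := if h : i < n then x ⟨i, h⟩ else 0

/- Abstract even-case algebra of integrals: `2m-1` independent variables,
coordinate `0` is `H`, coordinates `1,…,m-1` are `F_1,…,F_{m-1}` and
coordinates `m,…,2m-2` are `G_1,…,G_{m-1}` (`G_j` at index `(m-1)+j`). -/

/-- The value of the bracket `{F_i, G_j}`:
`-F_i G_j` if `κ(i,j) = i+j-m-1 < 0`, and `-F_{m-j} G_{m-i}` otherwise. -/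
noncomputable def peFG (m i j : ℕ) (y : Fin (2*m-1) → ℝ) : ℝ :=
  if i + j < m + 1 then -(get y i * get y ((m-1)+j))
  else -(get y (m-j) * get y ((m-1)+(m-i)))

/-- The even-case structure matrix: `{H,·} = 0`, `{F_i,F_j} = {G_i,G_j} = 0`, and
`{F_i,G_j}` as in `peFG`, extended antisymmetrically. -/
noncomputable def Pe (m : ℕ) : Fin (2*m-1) → Fin (2*m-1) → (Fin (2*m-1) → ℝ) → ℝ :=
  fun a b y =>
    if 1 ≤ (a:ℕ) ∧ (a:ℕ) ≤ m-1 ∧ m ≤ (b:ℕ) then peFG m (a:ℕ) ((b:ℕ)-(m-1)) y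
    else if 1 ≤ (b:ℕ) ∧ (b:ℕ) ≤ m-1 ∧ m ≤ (a:ℕ) then -(peFG m (b:ℕ) ((a:ℕ)-(m-1)) y)
    else 0

/-- `J_k = F_{m-1-l} G_{1+k} - F_{m-1-k} G_{1+l}`. -/
noncomputable def Jfun (m l k : ℕ) : (Fin (2*m-1) → ℝ) → ℝ := fun y =>
  get y (m-1-l) * get y ((m-1)+(1+k)) - get y (m-1-k) * get y ((m-1)+(1+l))

lemma get_eq_proj {n : ℕ} (j : ℕ) (hj : j < n) :
    (fun y : Fin n → ℝ => get y j) =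
      ⇑(ContinuousLinearMap.proj (R := ℝ) (φ := fun _ : Fin n => ℝ) ⟨j, hj⟩) := by
  funext y; simp [_root_.get, hj]

lemma diff_get {n : ℕ} (j : ℕ) (y : Fin n → ℝ) :
    DifferentiableAt ℝ (fun y : Fin n → ℝ => get y j) y := by
  by_cases hj : j < n
  · rw [get_eq_proj j hj]
    exact (ContinuousLinearMap.proj (R := ℝ) (φ := fun _ : Fin n => ℝ) ⟨j, hj⟩).differentiableAt
  · simp only [_root_.get, dif_neg hj]
    exact differentiableAt_const 0

lemma pd_get {n : ℕ} (a : Fin n) (j : ℕ) (hj : j < n) (y : Fin n → ℝ) :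
    pd a (fun y => get y j) y = if (a : ℕ) = j then 1 else 0 := by
  rw [pd, get_eq_proj j hj, ContinuousLinearMap.fderiv]
  simp [ContinuousLinearMap.proj_apply, Pi.single_apply, Fin.ext_iff, eq_comm]

lemma pd_mul {n : ℕ} (a : Fin n) (f g : (Fin n → ℝ) → ℝ) (y : Fin n → ℝ)
    (hf : DifferentiableAt ℝ f y) (hg : DifferentiableAt ℝ g y) :
    pd a (fun y => f y * g y) y = pd a f y * g y + f y * pd a g y := by
  unfold pd
  rw [fderiv_fun_mul hf hg]
  simp only [ContinuousLinearMap.add_apply, ContinuousLinearMap.smul_apply, smul_eq_mul]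
  ring

lemma pd_sub {n : ℕ} (a : Fin n) (f g : (Fin n → ℝ) → ℝ) (y : Fin n → ℝ)
    (hf : DifferentiableAt ℝ f y) (hg : DifferentiableAt ℝ g y) :
    pd a (fun y => f y - g y) y = pd a f y - pd a g y := by
  unfold pd
  rw [fderiv_fun_sub hf hg]
  simp

lemma pd_J {n : ℕ} (p q r s : ℕ) (hp : p < n) (hq : q < n) (hr : r < n) (hs : s < n)
    (b : Fin n) (y : Fin n → ℝ) :
    pd b (fun y => get y p * get y q - get y r * get y s) y =
      ((if (b:ℕ) = p then 1 else 0) * get y q + get y p * (if (b:ℕ) = q then 1 else 0))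
      - ((if (b:ℕ) = r then 1 else 0) * get y s + get y r * (if (b:ℕ) = s then 1 else 0)) := by
  rw [pd_sub b (fun y => get y p * get y q) (fun y => get y r * get y s) y
      ((diff_get p y).mul (diff_get q y)) ((diff_get r y).mul (diff_get s y)),
    pd_mul b _ _ y (diff_get p y) (diff_get q y),
    pd_mul b _ _ y (diff_get r y) (diff_get s y),
    pd_get b p hp y, pd_get b q hq y, pd_get b r hr y, pd_get b s hs y]

/-- In the even-case algebra of integrals, `{F_i, J_k} = 0` for all
`m-1-l ≤ i ≤ m-1` and `l+1 ≤ k ≤ m-2`. -/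
theorem even_FJ_commute (m l : ℕ) (hm : 3 ≤ m) (hl : l ≤ m-3)
    (i k : ℕ) (hi1 : m-1-l ≤ i) (hi2 : i ≤ m-1) (hk1 : l+1 ≤ k) (hk2 : k ≤ m-2)
    (y : Fin (2*m-1) → ℝ) :
    pb (Pe m) (fun y => get y i) (Jfun m l k) y = 0 := by
  have hp : m-1-l < 2*m-1 := by omega
  have hq : (m-1)+(1+k) < 2*m-1 := by omega
  have hr : m-1-k < 2*m-1 := by omega
  have hs : (m-1)+(1+l) < 2*m-1 := by omega
  have hiN : i < 2*m-1 := by omega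
  have hJ : ∀ b : Fin (2*m-1), pd b (Jfun m l k) y =
      ((if (b:ℕ) = m-1-l then 1 else 0) * get y ((m-1)+(1+k))
        + get y (m-1-l) * (if (b:ℕ) = (m-1)+(1+k) then 1 else 0))
      - ((if (b:ℕ) = m-1-k then 1 else 0) * get y ((m-1)+(1+l))
        + get y (m-1-k) * (if (b:ℕ) = (m-1)+(1+l) then 1 else 0)) := by
    intro b
    unfold Jfun
    exact pd_J _ _ _ _ hp hq hr hs b y
  have hPeG : ∀ (j : ℕ) (hj : (m-1)+j < 2*m-1), 1 ≤ j →
      Pe m ⟨i, hiN⟩ ⟨(m-1)+j, hj⟩ y = peFG m i j y := by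
    intro j hj hj1
    show (if 1 ≤ i ∧ i ≤ m-1 ∧ m ≤ (m-1)+j then peFG m i (((m-1)+j)-(m-1)) y
      else if 1 ≤ (m-1)+j ∧ (m-1)+j ≤ m-1 ∧ m ≤ i then -(peFG m ((m-1)+j) (i-(m-1)) y)
      else 0) = peFG m i j y
    rw [if_pos (by omega)]
    have e : (m-1)+j-(m-1) = j := by omega
    rw [e]
  have hPe0 : ∀ b : Fin (2*m-1), (b:ℕ) < m → Pe m ⟨i, hiN⟩ b y = 0 := by
    intro b hb
    show (if 1 ≤ i ∧ i ≤ m-1 ∧ m ≤ (b:ℕ) then peFG m i ((b:ℕ)-(m-1)) y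
      else if 1 ≤ (b:ℕ) ∧ (b:ℕ) ≤ m-1 ∧ m ≤ i then -(peFG m (b:ℕ) (i-(m-1)) y)
      else 0) = 0
    rw [if_neg (by omega), if_neg (by omega)]
  unfold pb
  rw [Finset.sum_eq_single (⟨i, hiN⟩ : Fin (2*m-1))]
  · have key : ∀ b : Fin (2*m-1),
        Pe m ⟨i, hiN⟩ b y * pd ⟨i, hiN⟩ (fun y => get y i) y * pd b (Jfun m l k) y
        = (if b = ⟨(m-1)+(1+k), hq⟩ then peFG m i (1+k) y * get y (m-1-l) else 0)
          + (if b = ⟨(m-1)+(1+l), hs⟩ then -(peFG m i (1+l) y * get y (m-1-k)) else 0) := by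
      intro b
      rw [pd_get _ i hiN y, if_pos rfl, mul_one, hJ b]
      by_cases hbq : b = ⟨(m-1)+(1+k), hq⟩
      · subst hbq
        have hne : (⟨(m-1)+(1+k), hq⟩ : Fin (2*m-1)) ≠ ⟨(m-1)+(1+l), hs⟩ := by
          simp only [ne_eq, Fin.mk.injEq]; omega
        rw [hPeG (1+k) hq (by omega),
          if_pos (rfl : (⟨(m-1)+(1+k), hq⟩ : Fin (2*m-1)) = ⟨(m-1)+(1+k), hq⟩),
          if_neg hne,
          if_neg (show ¬((m-1)+(1+k) = m-1-l) by omega),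
          if_pos (show (m-1)+(1+k) = (m-1)+(1+k) from rfl),
          if_neg (show ¬((m-1)+(1+k) = m-1-k) by omega),
          if_neg (show ¬((m-1)+(1+k) = (m-1)+(1+l)) by omega)]
        ring
      · by_cases hbs : b = ⟨(m-1)+(1+l), hs⟩
        · subst hbs
          rw [hPeG (1+l) hs (by omega), if_neg hbq,
            if_pos (rfl : (⟨(m-1)+(1+l), hs⟩ : Fin (2*m-1)) = ⟨(m-1)+(1+l), hs⟩),
            if_neg (show ¬((m-1)+(1+l) = m-1-l) by omega),
            if_neg (show ¬((m-1)+(1+l) = (m-1)+(1+k)) by omega),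
            if_neg (show ¬((m-1)+(1+l) = m-1-k) by omega),
            if_pos (show (m-1)+(1+l) = (m-1)+(1+l) from rfl)]
          ring
        · have hbq' : ¬((b:ℕ) = (m-1)+(1+k)) := fun h => hbq (Fin.ext h)
          have hbs' : ¬((b:ℕ) = (m-1)+(1+l)) := fun h => hbs (Fin.ext h)
          rw [if_neg hbq, if_neg hbs, if_neg hbq', if_neg hbs']
          by_cases h1 : (b:ℕ) = m-1-l
          · rw [hPe0 b (by omega)]; ring
          · by_cases h2 : (b:ℕ) = m-1-k
            · rw [hPe0 b (by omega)]; ring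
            · rw [if_neg h1, if_neg h2]; ring
    rw [Finset.sum_congr rfl (fun b _ => key b), Finset.sum_add_distrib,
      Finset.sum_ite_eq' Finset.univ, Finset.sum_ite_eq' Finset.univ]
    simp only [Finset.mem_univ, if_pos]
    have hQ : peFG m i (1+k) y = -(get y (m-1-k) * get y ((m-1)+(m-i))) := by
      show (if i + (1+k) < m+1 then -(get y i * get y ((m-1)+(1+k)))
        else -(get y (m-(1+k)) * get y ((m-1)+(m-i))))
        = -(get y (m-1-k) * get y ((m-1)+(m-i)))
      rw [if_neg (by omega), show m-(1+k) = m-1-k by omega]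
    have hS : peFG m i (1+l) y = -(get y (m-1-l) * get y ((m-1)+(m-i))) := by
      show (if i + (1+l) < m+1 then -(get y i * get y ((m-1)+(1+l)))
        else -(get y (m-(1+l)) * get y ((m-1)+(m-i))))
        = -(get y (m-1-l) * get y ((m-1)+(m-i)))
      split_ifs with h
      · rw [show get y i = get y (m-1-l) by rw [show i = m-1-l by omega],
          show get y ((m-1)+(1+l)) = get y ((m-1)+(m-i)) by
            rw [show (m-1)+(1+l) = (m-1)+(m-i) by omega]]
      · rw [show m-(1+l) = m-1-l by omega]
    rw [hQ, hS]
    ring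
  · intro b _ hb
    have h0 : pd b (fun y => get y i) y = 0 := by
      rw [pd_get _ i hiN y, if_neg (fun h => hb (Fin.ext h))]
    simp [h0]
  · intro h
    exact absurd (Finset.mem_univ _) h
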